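/- arXiv:2106.15886 — 2 statements merged into one kernel-verified Lean document; each statement's English description precedes it below -/
import Mathlib

section
/- For every word w ∈ Σ*: μ_q(wa)₁₂ ≺ μ_q(wb)₁₂, and μ_q(bw)₁₂ ≺ μ_q(awa)₁₂ ≺ μ_q(awb)₁₂. -/
open Polynomial

/-- The letter `a` is encoded by `false`, the letter `b` by `true`.
`μ_q` of a single letter. -/
noncomputable def muqLetter : Bool → Matrix (Fin 2) (Fin 2) (Polynomial ℤ)
  | false => !![X + X ^ 2, 1; X, 1]
  | true  => !![X + 2 * X ^ 2 + X ^ 3 + X ^ 4, 1 + X; X + X ^ 2, 1]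

/-- The monoid homomorphism `μ_q : Σ* → M₂(ℤ[q])`, extended multiplicatively,
with the empty word mapped to the identity matrix. -/
noncomputable def muq (w : List Bool) : Matrix (Fin 2) (Fin 2) (Polynomial ℤ) :=
  (w.map muqLetter).prod


/-- `f ≺ g` iff `f ≠ g` and `g - f` has nonnegative integer coefficients. -/
def PolyPrec (f g : Polynomial ℤ) : Prop :=
  f ≠ g ∧ ∀ i : ℕ, 0 ≤ (g - f).coeff i

/-! All entries of `μ_q(w)` have nonnegative coefficients, and the differences to be shown
positive are `μ_q(wb)₁₂ - μ_q(wa)₁₂ = q μ_q(w)₁₁` and `μ_q(awa)₁₂ - μ_q(bw)₁₂`, a polynomial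
expression in the entries of `μ_q(w)`. The invariant is that `g(M) = M₁₁ - q M₁₂` is nonzero with
nonnegative coefficients for `M = μ_q(w)`: right multiplication by `a` or `b` turns it into
`q² M₁₁`, resp. `(q² + q³ + q⁴) M₁₁ + q² M₁₂`, and `M₁₁ = g(M) + q M₁₂`. Writing `w = w'c`, the
second difference is likewise `q³ g(μ_q(w'))` or `(q³ + q⁴ + q⁵ + q⁶) μ_q(w')₁₁` plus terms with
nonnegative coefficients. -/

namespace Polynomial

-- The image of `ℕ[X]`, which makes it a subsemiring by construction.
noncomputable abbrev nonnegCoeffs : Subsemiring ℤ[X] := lifts (Nat.castRingHom ℤ)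

theorem mem_nonnegCoeffs {f : ℤ[X]} : f ∈ nonnegCoeffs ↔ ∀ i, 0 ≤ f.coeff i := by
  simp only [lifts_iff_coeff_lifts, Set.mem_range, eq_natCast]
  exact forall_congr' fun i =>
    ⟨fun ⟨n, hn⟩ => hn ▸ n.cast_nonneg, fun h => ⟨_, Int.toNat_of_nonneg h⟩⟩

theorem add_ne_zero_of_mem_nonnegCoeffs {f g : ℤ[X]} (hf : f ∈ nonnegCoeffs)
    (hg : g ∈ nonnegCoeffs) (hf0 : f ≠ 0) : f + g ≠ 0 := by
  obtain ⟨i, hi⟩ : ∃ i, f.coeff i ≠ 0 := by simpa [Polynomial.ext_iff] using hf0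
  have hfi := mem_nonnegCoeffs.1 hf i
  have hgi := mem_nonnegCoeffs.1 hg i
  refine fun h => hi ?_
  have := congrArg (coeff · i) h
  simp only [coeff_add, coeff_zero] at this
  omega

def IsPositive (f : ℤ[X]) : Prop := f ∈ nonnegCoeffs ∧ f ≠ 0

theorem IsPositive.add {f g : ℤ[X]} (hf : IsPositive f) (hg : g ∈ nonnegCoeffs) :
    IsPositive (f + g) :=
  ⟨add_mem hf.1 hg, add_ne_zero_of_mem_nonnegCoeffs hf.1 hg hf.2⟩

theorem IsPositive.mul {f g : ℤ[X]} (hf : IsPositive f) (hg : IsPositive g) :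
    IsPositive (f * g) :=
  ⟨mul_mem hf.1 hg.1, mul_ne_zero hf.2 hg.2⟩

theorem isPositive_X_pow (n : ℕ) : IsPositive (X ^ n : ℤ[X]) :=
  ⟨pow_mem (X_mem_lifts _) n, pow_ne_zero n X_ne_zero⟩

end Polynomial

theorem PolyPrec.of_isPositive_sub {f g : ℤ[X]} (h : (g - f).IsPositive) : PolyPrec f g :=
  ⟨fun hfg => h.2 (by rw [hfg, sub_self]), mem_nonnegCoeffs.1 h.1⟩

theorem muq_nil : muq [] = 1 := rfl

theorem muq_cons (c : Bool) (w : List Bool) : muq (c :: w) = muqLetter c * muq w := by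
  simp [muq]

theorem muq_append_singleton (w : List Bool) (c : Bool) :
    muq (w ++ [c]) = muq w * muqLetter c := by
  simp [muq]

theorem muqLetter_mem_matrix (c : Bool) : muqLetter c ∈ nonnegCoeffs.matrix := by
  intro i j
  cases c <;> fin_cases i <;> fin_cases j <;> simp [muqLetter] <;> aesop (add safe X_mem_lifts)

theorem muq_mem_matrix (w : List Bool) : muq w ∈ nonnegCoeffs.matrix :=
  Subsemiring.list_prod_mem _ (List.forall_mem_map.2 fun c _ => muqLetter_mem_matrix c)

section Gaps

variable (M : Matrix (Fin 2) (Fin 2) ℤ[X])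

noncomputable def topRowGap : ℤ[X] := M 0 0 - X * M 0 1

noncomputable def slack : ℤ[X] := (muqLetter false * M * muqLetter false - muqLetter true * M) 0 1

theorem topRowGap_one : topRowGap 1 = 1 := by simp [topRowGap]

theorem slack_one : slack 1 = X ^ 2 := by
  simp only [slack, Matrix.sub_apply, Matrix.mul_apply, Fin.sum_univ_two]
  simp [muqLetter]; ring

theorem topRowGap_mul_a : topRowGap (M * muqLetter false) = X ^ 2 * M 0 0 := by
  simp [topRowGap, muqLetter, Matrix.mul_apply, Fin.sum_univ_two]; ring

theorem topRowGap_mul_b :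
    topRowGap (M * muqLetter true) = (X ^ 2 + X ^ 3 + X ^ 4) * M 0 0 + X ^ 2 * M 0 1 := by
  simp [topRowGap, muqLetter, Matrix.mul_apply, Fin.sum_univ_two]; ring

theorem slack_mul_a : slack (M * muqLetter false) = X ^ 3 * topRowGap M + X ^ 2 * M 1 0 := by
  simp only [slack, topRowGap, Matrix.sub_apply, Matrix.mul_apply, Fin.sum_univ_two]
  simp [muqLetter]; ring

theorem slack_mul_b :
    slack (M * muqLetter true) = (X ^ 3 + X ^ 4 + X ^ 5 + X ^ 6) * M 0 0 + X ^ 3 * M 0 1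
      + (X ^ 2 + X ^ 3 + X ^ 4) * M 1 0 + X ^ 2 * M 1 1 := by
  simp only [slack, Matrix.sub_apply, Matrix.mul_apply, Fin.sum_univ_two]
  simp [muqLetter]; ring

end Gaps

theorem isPositive_zero_zero_of_topRowGap {M : Matrix (Fin 2) (Fin 2) ℤ[X]}
    (hM : M ∈ nonnegCoeffs.matrix) (h : (topRowGap M).IsPositive) : (M 0 0).IsPositive := by
  simpa [topRowGap] using h.add (mul_mem (X_mem_lifts _) (hM 0 1))

theorem isPositive_topRowGap_muq (w : List Bool) : (topRowGap (muq w)).IsPositive := by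
  induction w using List.reverseRecOn with
  | nil => rw [muq_nil, topRowGap_one]; exact ⟨one_mem _, one_ne_zero⟩
  | append_singleton w c ih =>
    have hM : ∀ i j, muq w i j ∈ nonnegCoeffs := muq_mem_matrix w
    have h00 := isPositive_zero_zero_of_topRowGap hM ih
    cases c
    · rw [muq_append_singleton, topRowGap_mul_a]
      exact (isPositive_X_pow 2).mul h00
    · rw [muq_append_singleton, topRowGap_mul_b]
      refine ((((isPositive_X_pow 2).add ?_).add ?_).mul h00).add ?_ <;>
      aesop (add safe X_mem_lifts)

theorem isPositive_zero_zero_muq (w : List Bool) : (muq w 0 0).IsPositive :=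
  isPositive_zero_zero_of_topRowGap (muq_mem_matrix w) (isPositive_topRowGap_muq w)

theorem isPositive_slack_muq (w : List Bool) : (slack (muq w)).IsPositive := by
  cases w using List.reverseRecOn with
  | nil => rw [muq_nil, slack_one]; exact isPositive_X_pow 2
  | append_singleton w c =>
    have hM : ∀ i j, muq w i j ∈ nonnegCoeffs := muq_mem_matrix w
    cases c
    · rw [muq_append_singleton, slack_mul_a]
      refine ((isPositive_X_pow 3).mul (isPositive_topRowGap_muq w)).add ?_
      aesop (add safe X_mem_lifts)
    · rw [muq_append_singleton, slack_mul_b]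
      refine (((((((isPositive_X_pow 3).add ?_).add ?_).add ?_).mul
        (isPositive_zero_zero_muq w)).add ?_).add ?_).add ?_ <;>
      aesop (add safe X_mem_lifts)

theorem muq_append_true_sub_append_false (w : List Bool) :
    muq (w ++ [true]) 0 1 - muq (w ++ [false]) 0 1 = X * muq w 0 0 := by
  simp [muq_append_singleton, muqLetter, Matrix.mul_apply, Fin.sum_univ_two]; ring

theorem muq_cons_append_sub_cons (w : List Bool) :
    muq (false :: w ++ [false]) 0 1 - muq (true :: w) 0 1 = slack (muq w) := by
  rw [muq_append_singleton, muq_cons, muq_cons, slack, Matrix.sub_apply]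

theorem polyPrec_muq_append_false_true (w : List Bool) :
    PolyPrec (muq (w ++ [false]) 0 1) (muq (w ++ [true]) 0 1) := by
  apply PolyPrec.of_isPositive_sub
  rw [muq_append_true_sub_append_false]
  simpa using (isPositive_X_pow 1).mul (isPositive_zero_zero_muq w)

theorem muq12_increasing_on_small_changes (w : List Bool) :
    PolyPrec (muq (w ++ [false]) 0 1) (muq (w ++ [true]) 0 1) ∧
    PolyPrec (muq (true :: w) 0 1) (muq (false :: w ++ [false]) 0 1) ∧
    PolyPrec (muq (false :: w ++ [false]) 0 1) (muq (false :: w ++ [true]) 0 1) := by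
  refine ⟨polyPrec_muq_append_false_true w, ?_, polyPrec_muq_append_false_true (false :: w)⟩
  apply PolyPrec.of_isPositive_sub
  rw [muq_cons_append_sub_cons]
  exact isPositive_slack_muq w
end

section
/- Let s : ℤ → Σ be a balanced sequence admitting a factorization s = p̃·xy·p with {x, y} = {a, b}. Let n ≥ 1 and let w = s_1 s_2 ⋯ s_{n−1} be the prefix of p of length n − 1. Then s has exactly n + 1 distinct factors of length n; listing them in lexicographic order as u_0 <_lex u_1 <_lex ⋯ <_lex u_n (with a < b): (i) u_0 = a·w and u_n = b·w; (ii) there exists i ∈ {0, …, n−1} such that u_i = w̃·a and u_{i+1} = w̃·b; (iii) for every j ∈ {0, …, n−1} with j ≠ i, there exist prefixes x', y' of w such that u_j = x̃'·ab·y' and u_{j+1} = x̃'·ba·y', where ·̃ denotes word reversal. -/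
/-- The letter `a` is encoded by `false`, the letter `b` by `true`.
`u` is a factor of the biinfinite sequence `s`. -/
def IsFactor (s : ℤ → Bool) (u : List Bool) : Prop :=
  ∃ k : ℤ, u = (List.range u.length).map fun i => s (k + i)

/-- `s` is balanced: any two factors of the same length have numbers of
occurrences of each letter differing by at most 1. -/
def IsBalanced (s : ℤ → Bool) : Prop :=
  ∀ u v : List Bool, IsFactor s u → IsFactor s v → u.length = v.length →
    ∀ c : Bool, |(u.count c : ℤ) - (v.count c : ℤ)| ≤ 1

/-- A biinfinite sequence `s` admits a factorization `s = p̃·xy·p` with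
`{x, y} = {a, b}` (where `p = s₁s₂s₃⋯`) iff `s (-1) ≠ s 0` and
`s n = s (-n - 1)` for all `n ∈ ℤ ∖ {-1, 0}`. -/
def HasCentralFactorization (s : ℤ → Bool) : Prop :=
  s (-1) ≠ s 0 ∧ ∀ n : ℤ, n ≠ -1 → n ≠ 0 → s n = s (-n - 1)

/-!
In a balanced word at most one factor of each length is right special and at most one is left
special: two of them would produce factors `a·z·a` and `b·z·b`. Because `s₋₁ ≠ s₀`, the `n + 1`
windows of length `n` meeting the centre are pairwise distinct, and by induction on `n` they are
all the factors: by the mirror symmetry `w̃` ends just before the centre, so it is right special,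
and a factor that does not extend a central window has a right special prefix, which must then
be `w̃`. Likewise `w` is left special, and balance forces the factor set to be closed under
reversal.

A factor below `a·w` or above `b·w` would again give `a·z·a` and `b·z·b`, against `w` being left
special. Two consecutive factors first differ after a right special prefix `x̃`, `x` a prefix of
`w`. Either `x = w`, or they are squeezed to `x̃·ab·y` and `x̃·ba·y`, which are both factors: one
is a central window, the other the reversal of one.
-/

def window (s : ℤ → Bool) (k : ℤ) (m : ℕ) : List Bool :=
  (List.range m).map fun i : ℕ => s (k + i)

section Window

variable {s : ℤ → Bool}

@[simp]
theorem length_window (k : ℤ) (m : ℕ) : (window s k m).length = m := by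
  simp [window]

theorem map_range_eq_window (k : ℤ) (m : ℕ) :
    (List.range m).map (fun i => s (k + i)) = window s k m := by
  simp [window, List.map_eq_flatMap, List.flatMap_assoc]

theorem isFactor_iff {u : List Bool} : IsFactor s u ↔ ∃ k, u = window s k u.length := by
  simp only [IsFactor, map_range_eq_window]

theorem isFactor_window (k : ℤ) (m : ℕ) : IsFactor s (window s k m) :=
  isFactor_iff.2 ⟨k, by rw [length_window]⟩

theorem window_add (k : ℤ) (m₁ m₂ : ℕ) :
    window s k (m₁ + m₂) = window s k m₁ ++ window s (k + m₁) m₂ := by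
  simp only [window, List.range_add, List.map_append, List.map_map]
  congr 2
  ext i
  simp [add_assoc]

theorem window_succ (k : ℤ) (m : ℕ) : window s k (m + 1) = window s k m ++ [s (k + m)] := by
  simp [window, List.range_succ]

theorem window_succ' (k : ℤ) (m : ℕ) : window s k (m + 1) = s k :: window s (k + 1) m := by
  rw [add_comm m, window_add]
  simp [window]

theorem IsFactor.of_infix {u v : List Bool} (hv : IsFactor s v) (h : u <:+: v) : IsFactor s u := by
  obtain ⟨a, b, rfl⟩ := h
  obtain ⟨k, hk⟩ := isFactor_iff.1 hv
  rw [List.length_append, List.length_append, window_add, window_add] at hk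
  obtain ⟨hk, -⟩ := List.append_inj hk (by simp)
  obtain ⟨-, hk⟩ := List.append_inj hk (by simp)
  exact hk ▸ isFactor_window _ _

theorem IsFactor.of_prefix {u v : List Bool} (hv : IsFactor s v) (h : u <+: v) : IsFactor s u :=
  hv.of_infix h.isInfix

theorem IsFactor.of_suffix {u v : List Bool} (hv : IsFactor s v) (h : u <:+ v) : IsFactor s u :=
  hv.of_infix h.isInfix

theorem IsFactor.exists_cons {u : List Bool} (hu : IsFactor s u) : ∃ c, IsFactor s (c :: u) := by
  obtain ⟨k, hk⟩ := isFactor_iff.1 hu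
  refine ⟨s (k - 1), ?_⟩
  have := window_succ' (s := s) (k - 1) u.length
  rw [sub_add_cancel, ← hk] at this
  exact this ▸ isFactor_window _ _

end Window

theorem List.append_le_append_left {α : Type*} [LinearOrder α] (z : List α) {u v : List α}
    (h : u ≤ v) : z ++ u ≤ z ++ v := by
  rcases h.lt_or_eq with h | rfl
  exacts [(List.append_left_lt h).le, le_rfl]

theorem List.exists_prefix_of_lt {u v : List Bool} (h : u < v) (hl : u.length = v.length) :
    ∃ z, z ++ [false] <+: u ∧ z ++ [true] <+: v := by
  induction u generalizing v with
  | nil => cases v <;> simp_all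
  | cons a u ih =>
    obtain _ | ⟨b, v⟩ := v
    · simp at hl
    rcases List.cons_lt_cons_iff.1 h with hab | ⟨rfl, htail⟩
    · obtain ⟨rfl, rfl⟩ : a = false ∧ b = true := by revert hab; cases a <;> cases b <;> decide
      exact ⟨[], by simp, by simp⟩
    · obtain ⟨z, h₀, h₁⟩ := ih htail (by simpa using hl)
      exact ⟨a :: z, (List.prefix_cons_inj a).2 h₀, (List.prefix_cons_inj a).2 h₁⟩

theorem List.append_true_le_of_append_false_lt {z f : List Bool} (h : z ++ [false] < f)
    (hl : f.length = z.length + 1) : z ++ [true] ≤ f := by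
  induction z generalizing f with
  | nil =>
    obtain ⟨c, rfl⟩ := List.length_eq_one_iff.1 hl
    rcases List.cons_lt_cons_iff.1 h with hc | ⟨_, hnil⟩
    · obtain rfl : c = true := by revert hc; cases c <;> decide
      exact le_rfl
    · exact absurd hnil (List.lt_irrefl _)
  | cons a z ih =>
    obtain _ | ⟨c, f⟩ := f
    · simp at hl
    rcases List.cons_lt_cons_iff.1 h with hac | ⟨rfl, htail⟩
    · exact le_of_lt (List.Lex.rel hac)
    · exact List.cons_le_cons a (ih htail (by simpa using hl))

theorem Finset.orderEmbOfFin_succ_le {α : Type*} [LinearOrder α] {s : Finset α} {n : ℕ}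
    (h : s.card = n + 1) (j : Fin n) {x : α} (hx : x ∈ s) (hlt : s.orderEmbOfFin h j.castSucc < x) :
    s.orderEmbOfFin h j.succ ≤ x := by
  obtain ⟨k, rfl⟩ : x ∈ Set.range (s.orderEmbOfFin h) := by rwa [Finset.range_orderEmbOfFin]
  exact (s.orderEmbOfFin h).monotone
    (Fin.castSucc_lt_iff_succ_le.1 ((s.orderEmbOfFin h).lt_iff_lt.1 hlt))

def IsLeftSpecial (s : ℤ → Bool) (u : List Bool) : Prop :=
  ∀ c, IsFactor s (c :: u)

def IsRightSpecial (s : ℤ → Bool) (u : List Bool) : Prop :=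
  ∀ c, IsFactor s (u ++ [c])

section Special

variable {s : ℤ → Bool}

theorem isLeftSpecial_of_ne {u : List Bool} {a b : Bool} (hab : a ≠ b)
    (ha : IsFactor s (a :: u)) (hb : IsFactor s (b :: u)) : IsLeftSpecial s u := by
  intro c
  rcases Bool.eq_or_eq_not c a with rfl | rfl
  · exact ha
  · rwa [← Bool.eq_not_of_ne hab.symm]

theorem isRightSpecial_of_ne {u : List Bool} {a b : Bool} (hab : a ≠ b)
    (ha : IsFactor s (u ++ [a])) (hb : IsFactor s (u ++ [b])) : IsRightSpecial s u := by
  intro c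
  rcases Bool.eq_or_eq_not c a with rfl | rfl
  · exact ha
  · rwa [← Bool.eq_not_of_ne hab.symm]

end Special

namespace IsBalanced

variable {s : ℤ → Bool}

theorem not_isFactor_both (hs : IsBalanced s) (a : Bool) (z : List Bool)
    (h₁ : IsFactor s (a :: z ++ [a])) (h₂ : IsFactor s ((!a) :: z ++ [!a])) : False := by
  have := hs _ _ h₁ h₂ (by simp) a
  simp [List.count_append, abs_le] at this
  omega

theorem eq_of_isLeftSpecial (hs : IsBalanced s) {u v : List Bool} (hu : IsLeftSpecial s u)
    (hv : IsLeftSpecial s v) (hl : u.length = v.length) : u = v := by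
  wlog h : u < v generalizing u v
  · rcases lt_trichotomy u v with huv | huv | huv
    exacts [absurd huv h, huv, (this hv hu hl.symm huv).symm]
  obtain ⟨z, hz₀, hz₁⟩ := List.exists_prefix_of_lt h hl
  exact (hs.not_isFactor_both false z ((hu false).of_prefix ((List.prefix_cons_inj _).2 hz₀))
    ((hv true).of_prefix ((List.prefix_cons_inj _).2 hz₁))).elim

theorem eq_of_isRightSpecial (hs : IsBalanced s) {u v : List Bool} (hu : IsRightSpecial s u)
    (hv : IsRightSpecial s v) (hl : u.length = v.length) : u = v := by
  wlog h : u.reverse < v.reverse generalizing u v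
  · rcases lt_trichotomy u.reverse v.reverse with huv | huv | huv
    exacts [absurd huv h, List.reverse_injective huv, (this hv hu hl.symm huv).symm]
  obtain ⟨z, ⟨t₀, ht₀⟩, ⟨t₁, ht₁⟩⟩ := List.exists_prefix_of_lt h (by simpa using hl)
  refine (hs.not_isFactor_both false z.reverse ((hu false).of_suffix ⟨t₀.reverse, ?_⟩)
    ((hv true).of_suffix ⟨t₁.reverse, ?_⟩)).elim
  · rw [← List.reverse_reverse u, ← ht₀]; simp
  · rw [← List.reverse_reverse v, ← ht₁]; simp

theorem cons_false_le (hs : IsBalanced s) {L u : List Bool} (hL : IsLeftSpecial s L)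
    (hu : IsFactor s u) (hl : u.length = L.length + 1) : false :: L ≤ u := by
  by_contra! h
  obtain ⟨_ | ⟨c, z⟩, hz₀, hz₁⟩ := List.exists_prefix_of_lt h (by simpa using hl)
  · simp at hz₁
  obtain ⟨rfl, hzL⟩ := List.cons_prefix_cons.1 hz₁
  exact hs.not_isFactor_both false z (hu.of_prefix hz₀)
    ((hL true).of_prefix ((List.prefix_cons_inj _).2 hzL))

theorem le_cons_true (hs : IsBalanced s) {L u : List Bool} (hL : IsLeftSpecial s L)
    (hu : IsFactor s u) (hl : u.length = L.length + 1) : u ≤ true :: L := by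
  by_contra! h
  obtain ⟨_ | ⟨c, z⟩, hz₀, hz₁⟩ := List.exists_prefix_of_lt h (by simpa using hl.symm)
  · simp at hz₀
  obtain ⟨rfl, hzL⟩ := List.cons_prefix_cons.1 hz₀
  exact hs.not_isFactor_both false z ((hL false).of_prefix ((List.prefix_cons_inj _).2 hzL))
    (hu.of_prefix hz₁)

/-- Applied three times, this produces factors `a·z·a` and `(!a)·z·(!a)`. -/
theorem reverse_step (hs : IsBalanced s)
    (hLR : ∀ m, ∃ L, L.length = m ∧ IsLeftSpecial s L ∧ IsRightSpecial s L.reverse)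
    {x y : Bool} {mid : List Bool}
    (ih : ∀ v : List Bool, v.length ≤ mid.length + 1 → IsFactor s v → IsFactor s v.reverse)
    (hu : IsFactor s (x :: mid ++ [y])) (hrev : ¬ IsFactor s (y :: mid.reverse ++ [x])) :
    IsFactor s ((!y) :: mid.reverse ++ [x]) ∧ ¬ IsFactor s (x :: mid ++ [!y]) := by
  constructor
  · have hxmid : IsFactor s (mid.reverse ++ [x]) := by
      simpa using ih (x :: mid) (by simp) (hu.of_prefix (by simp))
    obtain ⟨d, hd⟩ := hxmid.exists_cons
    rcases Bool.eq_or_eq_not d y with rfl | rfl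
    exacts [absurd hd hrev, hd]
  · intro hu'
    obtain ⟨L, hlen, hL, hLrev⟩ := hLR (mid.length + 1)
    have hR : IsRightSpecial s (x :: mid) := isRightSpecial_of_ne (Bool.not_ne_self y).symm hu hu'
    have hxmid : x :: mid = L.reverse := hs.eq_of_isRightSpecial hR hLrev (by simp [hlen])
    have hLeq : L = mid.reverse ++ [x] := by rw [← List.reverse_reverse L, ← hxmid]; simp
    subst hLeq
    exact hrev (hL y)

theorem isFactor_reverse (hs : IsBalanced s)
    (hLR : ∀ m, ∃ L, L.length = m ∧ IsLeftSpecial s L ∧ IsRightSpecial s L.reverse)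
    {u : List Bool} (hu : IsFactor s u) : IsFactor s u.reverse := by
  induction hn : u.length using Nat.strong_induction_on generalizing u with | _ n ih => ?_
  obtain _ | ⟨x, t⟩ := u
  · exact hu
  obtain rfl | ⟨mid, y, rfl⟩ := List.eq_nil_or_concat t
  · exact hu
  simp only [List.concat_eq_append, List.length_cons, List.length_append] at hn hu ⊢
  have ih' : ∀ v : List Bool, v.length ≤ mid.length + 1 → IsFactor s v → IsFactor s v.reverse :=
    fun v hv hvf => ih v.length (by omega) hvf rfl
  have ih'' : ∀ v : List Bool, v.length ≤ mid.reverse.length + 1 → IsFactor s v →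
      IsFactor s v.reverse := by simpa using ih'
  by_contra hrev
  replace hrev : ¬ IsFactor s (y :: mid.reverse ++ [x]) := by simpa using hrev
  obtain ⟨hA, hA'⟩ := hs.reverse_step hLR ih' hu hrev
  obtain ⟨hB, hB'⟩ := hs.reverse_step hLR ih'' hA (by simpa using hA')
  rw [List.reverse_reverse] at hB
  obtain ⟨hC, -⟩ := hs.reverse_step hLR ih' hB hB'
  obtain rfl : y = !x := by
    refine Bool.eq_not_of_ne fun hxy => ?_
    subst hxy
    exact hs.not_isFactor_both y mid hu hB
  rw [Bool.not_not] at hA hC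
  exact hs.not_isFactor_both x mid.reverse hA hC

end IsBalanced

/-- For `j ≤ m`, the `m + 1` windows of length `m` meeting the centre `s₋₁ s₀`. -/
def centralWindow (s : ℤ → Bool) (j m : ℕ) : List Bool :=
  window s (-j) m

def IsCentral (s : ℤ → Bool) (u : List Bool) : Prop :=
  ∃ j ≤ u.length, u = centralWindow s j u.length

/-- The prefix `s₁ ⋯ sₘ` of `p`; the paper's `w` is `rightWord s (n - 1)`. -/
def rightWord (s : ℤ → Bool) (m : ℕ) : List Bool :=
  window s 1 m

section Central

variable {s : ℤ → Bool}

@[simp]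
theorem length_rightWord (m : ℕ) : (rightWord s m).length = m :=
  length_window 1 m

theorem rightWord_prefix {k m : ℕ} (h : k ≤ m) : rightWord s k <+: rightWord s m := by
  obtain ⟨d, rfl⟩ := Nat.exists_eq_add_of_le h
  rw [rightWord, rightWord, window_add]
  exact List.prefix_append _ _

theorem IsCentral.isFactor {u : List Bool} (h : IsCentral s u) : IsFactor s u := by
  obtain ⟨j, -, hj⟩ := h
  exact hj ▸ isFactor_window _ _

theorem isCentral_centralWindow {j m : ℕ} (hj : j ≤ m) : IsCentral s (centralWindow s j m) :=
  ⟨j, by simpa [centralWindow] using hj, by simp [centralWindow]⟩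

end Central

namespace HasCentralFactorization

variable {s : ℤ → Bool}

theorem reverse_rightWord (hfac : HasCentralFactorization s) (m : ℕ) :
    (rightWord s m).reverse = centralWindow s (m + 1) m := by
  induction m with
  | zero => rfl
  | succ m ih =>
    rw [rightWord, window_succ, List.reverse_append, ← rightWord, ih, centralWindow,
      centralWindow, window_succ']
    simp only [List.reverse_singleton, List.singleton_append]
    congr 1
    rw [hfac.2 _ (by omega) (by omega)]
    congr 1
    push_cast
    ring

theorem centralWindow_ne (hfac : HasCentralFactorization s) :
    ∀ {m i j : ℕ}, i < j → j ≤ m → centralWindow s i m ≠ centralWindow s j m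
  | 0, _, _, hij, hj, _ => by omega
  | m + 1, i, j, hij, hj, h => by
    rcases Nat.lt_or_ge j (m + 1) with hjm | hjm
    · rw [centralWindow, centralWindow, window_succ, window_succ] at h
      exact centralWindow_ne hfac hij (by omega) (List.append_inj h (by simp)).1
    obtain rfl : j = m + 1 := by omega
    obtain _ | i := i
    · have hshift : ∀ t < m + 1, s t = s (-(m + 1 : ℕ) + t) := fun t ht => by
        simpa [centralWindow, window, ht] using congrArg (·[t]?) h
      rcases Nat.eq_zero_or_pos m with rfl | hm
      · exact hfac.1 (by simpa using (hshift 0 (by omega)).symm)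
      · apply hfac.1
        calc s (-1) = s m := by simpa using (hshift m (by omega)).symm
          _ = s (-(m + 1 : ℕ)) := by rw [hfac.2 _ (by omega) (by omega)]; congr 1; push_cast; ring
          _ = s 0 := by simpa using (hshift 0 (by omega)).symm
    · rw [centralWindow, centralWindow, window_succ', window_succ'] at h
      refine centralWindow_ne hfac (m := m) (i := i) (j := m) (by omega) le_rfl ?_
      simpa [centralWindow, add_comm] using (List.cons.inj h).2

theorem isCentral_reverse_rightWord_append (hfac : HasCentralFactorization s) {m : ℕ}
    (hcov : ∀ u : List Bool, u.length = m → IsFactor s u → IsCentral s u) (c : Bool) :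
    IsCentral s ((rightWord s m).reverse ++ [c]) := by
  obtain ⟨q, hq, hρ⟩ := hcov (rightWord s m).reverse (by simp)
    (by rw [hfac.reverse_rightWord]; exact isFactor_window _ _)
  simp only [List.length_reverse, length_rightWord] at hq hρ
  have h₁ : centralWindow s (m + 1) (m + 1) = (rightWord s m).reverse ++ [s (-1)] := by
    rw [hfac.reverse_rightWord, centralWindow, centralWindow, window_succ]
    congr 3
    push_cast
    ring
  have h₂ : centralWindow s q (m + 1) = (rightWord s m).reverse ++ [s (-q + m)] := by
    rw [hρ, centralWindow, centralWindow, window_succ]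
  have hne : s (-1) ≠ s (-q + m) := fun h =>
    hfac.centralWindow_ne (by omega : q < m + 1) le_rfl (by rw [h₁, h₂, h])
  rcases Bool.eq_or_eq_not c (s (-1)) with rfl | rfl
  · rw [← h₁]
    exact isCentral_centralWindow le_rfl
  · rw [← Bool.eq_not_of_ne hne.symm, ← h₂]
    exact isCentral_centralWindow (by omega)

theorem isCentral_of_isFactor (hs : IsBalanced s) (hfac : HasCentralFactorization s)
    {u : List Bool} (hu : IsFactor s u) : IsCentral s u := by
  suffices ∀ m u, u.length = m → IsFactor s u → IsCentral s u from this _ u rfl hu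
  intro m
  induction m with
  | zero =>
    intro u hlen _
    rw [List.length_eq_zero_iff.1 hlen]
    exact isCentral_centralWindow (j := 0) le_rfl
  | succ m ih =>
    intro u hlen hu
    obtain ⟨k, rfl⟩ : ∃ k, u = window s k (m + 1) := hlen ▸ isFactor_iff.1 hu
    obtain ⟨q, hq, hg⟩ := ih _ (length_window k m) (isFactor_window k m)
    simp only [length_window] at hq hg
    rw [window_succ]
    by_cases hc : s (k + m) = s (-q + m)
    · rw [hg, hc, centralWindow, ← window_succ, ← centralWindow]
      exact isCentral_centralWindow (by omega)
    · have hgR : IsRightSpecial s (window s k m) := by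
        refine isRightSpecial_of_ne hc (window_succ k m ▸ isFactor_window _ _) ?_
        rw [hg, centralWindow, ← window_succ]
        exact isFactor_window _ _
      have hρR : IsRightSpecial s (rightWord s m).reverse := fun c =>
        (isCentral_reverse_rightWord_append hfac ih c).isFactor
      rw [hs.eq_of_isRightSpecial hgR hρR (by simp [rightWord])]
      exact isCentral_reverse_rightWord_append hfac ih _

theorem isRightSpecial_reverse_rightWord (hs : IsBalanced s) (hfac : HasCentralFactorization s)
    (m : ℕ) : IsRightSpecial s (rightWord s m).reverse := fun c =>
  (isCentral_reverse_rightWord_append hfac (fun _ _ => hfac.isCentral_of_isFactor hs) c).isFactor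

theorem isLeftSpecial_rightWord (hs : IsBalanced s) (hfac : HasCentralFactorization s) (m : ℕ) :
    IsLeftSpecial s (rightWord s m) := by
  obtain ⟨q, hq, hW⟩ := hfac.isCentral_of_isFactor (u := rightWord s m) hs (isFactor_window 1 m)
  simp only [length_rightWord] at hq hW
  have h₀ : centralWindow s 0 (m + 1) = s 0 :: rightWord s m := by
    simp [centralWindow, window_succ', rightWord]
  have h₁ : centralWindow s (q + 1) (m + 1) = s (-(q + 1 : ℕ)) :: rightWord s m := by
    rw [hW, centralWindow, centralWindow, window_succ']
    congr 2
    push_cast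
    ring
  have hne : s 0 ≠ s (-(q + 1 : ℕ)) := fun h =>
    hfac.centralWindow_ne (m := m + 1) (Nat.succ_pos q) (by omega) (by rw [h₀, h₁, h])
  exact isLeftSpecial_of_ne hne (h₀ ▸ isFactor_window _ _) (h₁ ▸ isFactor_window _ _)

theorem isFactor_reverse (hs : IsBalanced s) (hfac : HasCentralFactorization s) {u : List Bool}
    (hu : IsFactor s u) : IsFactor s u.reverse :=
  hs.isFactor_reverse (fun m => ⟨rightWord s m, by simp [rightWord],
    hfac.isLeftSpecial_rightWord hs m, hfac.isRightSpecial_reverse_rightWord hs m⟩) hu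

theorem centralWindow_eq_append (hfac : HasCentralFactorization s) (k l : ℕ) :
    centralWindow s (k + 1) (k + l + 2) =
      (rightWord s k).reverse ++ s (-1) :: s 0 :: rightWord s l := by
  rw [hfac.reverse_rightWord, centralWindow, centralWindow, add_assoc, window_add, window_succ',
    window_succ', rightWord]
  congr 4 <;> push_cast <;> ring

theorem isFactor_middle (hs : IsBalanced s) (hfac : HasCentralFactorization s) (k l : ℕ)
    (a : Bool) : IsFactor s ((rightWord s k).reverse ++ a :: (!a) :: rightWord s l) := by
  have hrev : IsFactor s ((rightWord s k).reverse ++ s 0 :: s (-1) :: rightWord s l) := by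
    have := hfac.isFactor_reverse hs (isFactor_window (s := s) (-(l + 1 : ℕ)) (l + k + 2))
    rw [← centralWindow, hfac.centralWindow_eq_append l k] at this
    simpa using this
  rcases Bool.eq_or_eq_not a (s (-1)) with rfl | rfl
  · rw [← Bool.eq_not_of_ne hfac.1.symm, ← hfac.centralWindow_eq_append]
    exact isFactor_window _ _
  · rwa [Bool.not_not, ← Bool.eq_not_of_ne hfac.1.symm]

theorem exists_reverse_rightWord_prefix_of_lt (hs : IsBalanced s)
    (hfac : HasCentralFactorization s) {U V : List Bool} (hUf : IsFactor s U) (hVf : IsFactor s V)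
    (hUV : U < V) (hl : U.length = V.length) :
    ∃ k, (rightWord s k).reverse ++ [false] <+: U ∧ (rightWord s k).reverse ++ [true] <+: V := by
  obtain ⟨z, hz₀, hz₁⟩ := List.exists_prefix_of_lt hUV hl
  have hzR : IsRightSpecial s z :=
    isRightSpecial_of_ne Bool.false_ne_true (hUf.of_prefix hz₀) (hVf.of_prefix hz₁)
  rw [hs.eq_of_isRightSpecial hzR (hfac.isRightSpecial_reverse_rightWord hs z.length)
    (by simp)] at hz₀ hz₁
  exact ⟨_, hz₀, hz₁⟩

theorem eq_of_consecutive (hs : IsBalanced s) (hfac : HasCentralFactorization s) {m : ℕ}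
    {U V : List Bool} (hU : U.length = m + 1) (hUf : IsFactor s U) (hV : V.length = m + 1)
    (hVf : IsFactor s V) (hUV : U < V)
    (hsucc : ∀ f : List Bool, f.length = m + 1 → IsFactor s f → U < f → V ≤ f) :
    (U = (rightWord s m).reverse ++ [false] ∧ V = (rightWord s m).reverse ++ [true]) ∨
    ∃ x y : List Bool, x <+: rightWord s m ∧ y <+: rightWord s m ∧
      U = x.reverse ++ [false, true] ++ y ∧ V = x.reverse ++ [true, false] ++ y := by
  obtain ⟨k, ⟨U', rfl⟩, ⟨V', rfl⟩⟩ :=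
    hfac.exists_reverse_rightWord_prefix_of_lt hs hUf hVf hUV (hU.trans hV.symm)
  simp only [List.append_assoc, List.singleton_append, List.length_append, List.length_reverse,
    length_rightWord, List.length_cons] at hU hV hUf hVf hUV hsucc ⊢
  obtain _ | ⟨c, U'⟩ := U'
  · obtain rfl : k = m := by simpa using hU
    obtain rfl : V' = [] := List.length_eq_zero_iff.1 (by omega)
    exact Or.inl ⟨rfl, rfl⟩
  obtain ⟨l, rfl⟩ : ∃ l, m = k + l + 1 := ⟨U'.length, by simp at hU; omega⟩
  have hL := hfac.isLeftSpecial_rightWord hs l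
  have hU' : c :: U' ≤ true :: rightWord s l :=
    hs.le_cons_true hL (hUf.of_suffix ((List.suffix_cons _ _).trans (List.suffix_append _ _)))
      (by simp at hU ⊢; omega)
  have hV' : false :: rightWord s l ≤ V' :=
    hs.cons_false_le hL (hVf.of_suffix ((List.suffix_cons _ _).trans (List.suffix_append _ _)))
      (by simp; omega)
  have hM := hfac.isFactor_middle hs k l false
  have hN := hfac.isFactor_middle hs k l true
  simp only [Bool.not_false, Bool.not_true] at hM hN
  have hUM : (rightWord s k).reverse ++ false :: c :: U' = (rightWord s k).reverse ++ false ::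
      true :: rightWord s l := by
    refine eq_of_le_of_not_lt (List.append_le_append_left _ (List.cons_le_cons false hU'))
      fun h => ?_
    refine (hsucc _ (by simp; omega) hM h).not_gt ?_
    exact List.append_left_lt (List.Lex.rel (by decide))
  rw [hUM] at hsucc
  have hVN : (rightWord s k).reverse ++ true :: V' = (rightWord s k).reverse ++ true ::
      false :: rightWord s l := by
    refine le_antisymm ?_ (List.append_le_append_left _ (List.cons_le_cons true hV'))
    exact hsucc _ (by simp; omega) hN (List.append_left_lt (List.Lex.rel (by decide)))
  refine Or.inr ⟨rightWord s k, rightWord s l, rightWord_prefix (by omega),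
    rightWord_prefix (by omega), ?_, ?_⟩
  · simp [hUM]
  · simp [hVN]

theorem mem_image_centralWindow_iff (hs : IsBalanced s) (hfac : HasCentralFactorization s)
    {m : ℕ} {v : List Bool} :
    v ∈ (Finset.range (m + 1)).image (centralWindow s · m) ↔ v.length = m ∧ IsFactor s v := by
  simp only [Finset.mem_image, Finset.mem_range]
  constructor
  · rintro ⟨j, -, rfl⟩
    exact ⟨by simp [centralWindow], isFactor_window _ _⟩
  · rintro ⟨rfl, hv⟩
    obtain ⟨j, hj, hv⟩ := hfac.isCentral_of_isFactor hs hv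
    exact ⟨j, by omega, hv.symm⟩

theorem card_image_centralWindow (hfac : HasCentralFactorization s) (m : ℕ) :
    ((Finset.range (m + 1)).image (centralWindow s · m)).card = m + 1 := by
  rw [Finset.card_image_of_injOn, Finset.card_range]
  intro i hi j hj hij
  simp only [Finset.coe_range, Set.mem_Iio] at hi hj
  by_contra hne
  rcases Nat.lt_or_gt_of_ne hne with h | h
  exacts [hfac.centralWindow_ne h (by omega) hij, hfac.centralWindow_ne h (by omega) hij.symm]

/-- The paper's `u₀ <ₗₑₓ ⋯ <ₗₑₓ uₘ`. -/
noncomputable def sortedFactors (hfac : HasCentralFactorization s) (m : ℕ) :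
    Fin (m + 1) ↪o List Bool :=
  ((Finset.range (m + 1)).image (centralWindow s · m)).orderEmbOfFin
    (hfac.card_image_centralWindow m)

theorem sortedFactors_spec (hs : IsBalanced s) (hfac : HasCentralFactorization s) {m : ℕ}
    (i : Fin (m + 1)) : (hfac.sortedFactors m i).length = m ∧ IsFactor s (hfac.sortedFactors m i) :=
  (hfac.mem_image_centralWindow_iff hs).1 (Finset.orderEmbOfFin_mem _ _ i)

theorem exists_sortedFactors_eq (hs : IsBalanced s) (hfac : HasCentralFactorization s) {m : ℕ}
    {v : List Bool} (hl : v.length = m) (hv : IsFactor s v) : ∃ i, v = hfac.sortedFactors m i := by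
  obtain ⟨i, hi⟩ : v ∈ Set.range (hfac.sortedFactors m) := by
    rw [sortedFactors, Finset.range_orderEmbOfFin]
    exact (hfac.mem_image_centralWindow_iff hs).2 ⟨hl, hv⟩
  exact ⟨i, hi.symm⟩

theorem sortedFactors_succ_le (hs : IsBalanced s) (hfac : HasCentralFactorization s) {m : ℕ}
    (j : Fin m) {f : List Bool} (hl : f.length = m) (hf : IsFactor s f)
    (hlt : hfac.sortedFactors m j.castSucc < f) : hfac.sortedFactors m j.succ ≤ f :=
  Finset.orderEmbOfFin_succ_le _ j ((hfac.mem_image_centralWindow_iff hs).2 ⟨hl, hf⟩) hlt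

theorem sortedFactors_zero (hs : IsBalanced s) (hfac : HasCentralFactorization s) (m : ℕ) :
    hfac.sortedFactors (m + 1) 0 = false :: rightWord s m := by
  have hL := hfac.isLeftSpecial_rightWord hs m
  obtain ⟨k, hk⟩ := hfac.exists_sortedFactors_eq hs (m := m + 1) (by simp) (hL false)
  refine le_antisymm (hk ▸ (hfac.sortedFactors _).monotone (Fin.zero_le k)) ?_
  exact hs.cons_false_le hL (hfac.sortedFactors_spec hs 0).2 (by simp [hfac.sortedFactors_spec hs])

theorem sortedFactors_last (hs : IsBalanced s) (hfac : HasCentralFactorization s) (m : ℕ) :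
    hfac.sortedFactors (m + 1) (Fin.last _) = true :: rightWord s m := by
  have hL := hfac.isLeftSpecial_rightWord hs m
  obtain ⟨k, hk⟩ := hfac.exists_sortedFactors_eq hs (m := m + 1) (by simp) (hL true)
  refine le_antisymm ?_ (hk ▸ (hfac.sortedFactors _).monotone (Fin.le_last k))
  exact hs.le_cons_true hL (hfac.sortedFactors_spec hs _).2 (by simp [hfac.sortedFactors_spec hs])

theorem exists_sortedFactors_eq_reverse_rightWord (hs : IsBalanced s)
    (hfac : HasCentralFactorization s) (m : ℕ) :
    ∃ i : Fin (m + 1), hfac.sortedFactors (m + 1) i.castSucc = (rightWord s m).reverse ++ [false] ∧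
      hfac.sortedFactors (m + 1) i.succ = (rightWord s m).reverse ++ [true] := by
  set u := hfac.sortedFactors (m + 1)
  have hR := hfac.isRightSpecial_reverse_rightWord hs m
  obtain ⟨t, ht⟩ := hfac.exists_sortedFactors_eq hs (m := m + 1) (by simp) (hR false)
  obtain ⟨t', ht'⟩ := hfac.exists_sortedFactors_eq hs (m := m + 1) (by simp) (hR true)
  have hlt : (rightWord s m).reverse ++ [false] < (rightWord s m).reverse ++ [true] :=
    List.append_left_lt (List.Lex.rel (by decide))
  have htt' : t < t' := u.lt_iff_lt.1 (ht ▸ ht' ▸ hlt)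
  set i := t.castPred (Fin.ne_last_of_lt htt')
  have hi : u i.castSucc = (rightWord s m).reverse ++ [false] := by simp [i, u, ht]
  refine ⟨i, hi, le_antisymm (hfac.sortedFactors_succ_le hs i (by simp) (hR true) (hi ▸ hlt)) ?_⟩
  exact List.append_true_le_of_append_false_lt (hi ▸ u.strictMono (Fin.castSucc_lt_succ (i := i)))
    (by simp [u, hfac.sortedFactors_spec hs])

end HasCentralFactorization

theorem ordered_factors_of_balanced
    (s : ℤ → Bool) (hs : IsBalanced s) (hfac : HasCentralFactorization s)
    (n : ℕ) (hn : 1 ≤ n)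
    (w : List Bool) (hw : w = (List.range (n - 1)).map fun i => s (1 + i)) :
    ∃ u : Fin (n + 1) → List Bool,
      -- the `u i` are factors of `s` of length `n`
      (∀ i, (u i).length = n ∧ IsFactor s (u i)) ∧
      -- every factor of `s` of length `n` is one of the `u i`
      (∀ v : List Bool, v.length = n → IsFactor s v → ∃ i, v = u i) ∧
      -- the `u i` are listed in (strictly) increasing lexicographic order,
      -- hence there are exactly `n + 1` distinct factors of length `n`
      (∀ i j : Fin (n + 1), i < j → List.Lex (· < ·) (u i) (u j)) ∧
      -- (i)
      u 0 = false :: w ∧ u (Fin.last n) = true :: w ∧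
      -- (ii) and (iii)
      (∃ i : Fin n,
        (u i.castSucc = w.reverse ++ [false] ∧ u i.succ = w.reverse ++ [true]) ∧
        ∀ j : Fin n, j ≠ i → ∃ x y : List Bool, x <+: w ∧ y <+: w ∧
          u j.castSucc = x.reverse ++ [false, true] ++ y ∧
          u j.succ = x.reverse ++ [true, false] ++ y) := by
  obtain ⟨m, rfl⟩ : ∃ m, n = m + 1 := ⟨n - 1, by omega⟩
  obtain rfl : w = rightWord s m := by rw [hw, map_range_eq_window, Nat.add_sub_cancel, rightWord]
  set u := hfac.sortedFactors (m + 1)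
  have hu := hfac.sortedFactors_spec hs (m := m + 1)
  obtain ⟨i, hi, hi'⟩ := hfac.exists_sortedFactors_eq_reverse_rightWord hs m
  refine ⟨u, hu, fun v => hfac.exists_sortedFactors_eq hs, fun _ _ h => u.strictMono h,
    hfac.sortedFactors_zero hs m, hfac.sortedFactors_last hs m, i, ⟨hi, hi'⟩, fun j hj => ?_⟩
  rcases hfac.eq_of_consecutive hs (hu _).1 (hu _).2 (hu _).1 (hu _).2
    (u.strictMono (Fin.castSucc_lt_succ (i := j))) (fun _ => hfac.sortedFactors_succ_le hs j)
    with ⟨h, -⟩ | h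
  · exact absurd (Fin.castSucc_injective _ (u.injective (h.trans hi.symm))) hj
  · exact h
end
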